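/- Data processing for H_H^ε under unital channels on the main system: for any state ρ^{AB}, any unital CPTP map F^{A→C} (F(I^A)=I^C), and ε ∈ [0,1], H_H^ε(A|B)_ρ ≤ H_H^ε(C|B)_{(F⊗I)(ρ)}. -/

import Mathlib

open Matrix Kronecker ComplexOrder

noncomputable section

def IsState {n : Type*} [Fintype n] (ρ : Matrix n n ℂ) : Prop :=
  ρ.PosSemidef ∧ ρ.trace = 1

/-- `2^{H_H^ε(ρ)}`: the optimal value of the hypothesis testing minimization
`min { Tr Π : 0 ≤ Π ≤ I, Tr[Πρ] ≥ 1-ε }`. -/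
def hypoVal {n : Type*} [Fintype n] [DecidableEq n] (ρ : Matrix n n ℂ) (ε : ℝ) : ℝ :=
  sInf {t : ℝ | ∃ P : Matrix n n ℂ, P.PosSemidef ∧ ((1 : Matrix n n ℂ) - P).PosSemidef ∧
    1 - ε ≤ ((P * ρ).trace).re ∧ t = (P.trace).re}

/-- The smooth hypothesis testing entropy `H_H^ε(ρ) = log₂` of the optimal value. -/
def HH {n : Type*} [Fintype n] [DecidableEq n] (ρ : Matrix n n ℂ) (ε : ℝ) : ℝ :=
  Real.logb 2 (hypoVal ρ ε)

/-- Outer product `|ψ⟩⟨ψ|`. -/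
def outer {n : Type*} (ψ : n → ℂ) : Matrix n n ℂ := Matrix.vecMulVec ψ (star ψ)

/-- Partial trace over the first tensor factor. -/
def ptL {α β : Type*} [Fintype α] (M : Matrix (α × β) (α × β) ℂ) : Matrix β β ℂ :=
  Matrix.of fun b1 b2 => ∑ a, M (a, b1) (a, b2)

/-- Partial trace over the second tensor factor. -/
def ptR {α β : Type*} [Fintype β] (M : Matrix (α × β) (α × β) ℂ) : Matrix α α ℂ :=
  Matrix.of fun a1 a2 => ∑ b, M (a1, b) (a2, b)

/-- The trace norm `‖M‖₁ = Tr √(Mᴴ M)`. -/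
def traceNorm {n : Type*} [Fintype n] [DecidableEq n] (M : Matrix n n ℂ) : ℝ :=
  (((Matrix.posSemidef_conjTranspose_mul_self M).1.eigenvectorUnitary.1 *
      Matrix.diagonal ((fun x : ℝ => (x : ℂ)) ∘ (Real.sqrt ·) ∘ (Matrix.posSemidef_conjTranspose_mul_self M).1.eigenvalues) *
      (star (Matrix.posSemidef_conjTranspose_mul_self M).1.eigenvectorUnitary : Matrix n n ℂ)).trace).re

end

/-- `2^{H_H^ε(A|B)_ρ}` for a bipartite state `ρ` on `A × B`:
`min { Tr[Π (I_A ⊗ ρ_B)] : 0 ≤ Π ≤ I, Tr[Π ρ] ≥ 1-ε }`. -/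
noncomputable def condVal {A B : Type*} [Fintype A] [DecidableEq A] [Fintype B] [DecidableEq B]
    (ρ : Matrix (A × B) (A × B) ℂ) (ε : ℝ) : ℝ :=
  sInf {t : ℝ | ∃ P : Matrix (A × B) (A × B) ℂ, P.PosSemidef ∧
    ((1 : Matrix (A × B) (A × B) ℂ) - P).PosSemidef ∧
    1 - ε ≤ ((P * ρ).trace).re ∧
    t = ((P * ((1 : Matrix A A ℂ) ⊗ₖ ptL ρ)).trace).re}

/-- `H_H^ε(A|B)_ρ`. -/
noncomputable def condHH {A B : Type*} [Fintype A] [DecidableEq A] [Fintype B] [DecidableEq B]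
    (ρ : Matrix (A × B) (A × B) ℂ) (ε : ℝ) : ℝ :=
  Real.logb 2 (condVal ρ ε)


set_option linter.unusedSectionVars false
set_option maxHeartbeats 1000000

section aux12
open Matrix Kronecker ComplexOrder

variable {A B C ι : Type*} [Fintype A] [DecidableEq A] [Fintype B] [DecidableEq B]
  [Fintype C] [DecidableEq C] [Fintype ι]

lemma aux_kronCT {l m p q : Type*} (M : Matrix l m ℂ) (N : Matrix p q ℂ) :
    (M ⊗ₖ N)ᴴ = Mᴴ ⊗ₖ Nᴴ := by
  ext ⟨a,b⟩ ⟨c,d⟩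
  simp [conjTranspose_apply, kroneckerMap_apply, mul_comm]

lemma aux_sum_kron {l m p q : Type*} (X : ι → Matrix l m ℂ) (Y : Matrix p q ℂ) :
    ∑ i, X i ⊗ₖ Y = (∑ i, X i) ⊗ₖ Y := by
  ext ⟨a,b⟩ ⟨c,d⟩
  simp [Matrix.sum_apply, kroneckerMap_apply, Finset.sum_mul]

lemma aux_psd_sum {n : Type*} [Fintype n] (f : ι → Matrix n n ℂ)
    (h : ∀ i, (f i).PosSemidef) : (∑ i, f i).PosSemidef := by
  classical
  exact Finset.sum_induction f _ (fun a b ha hb => ha.add hb) Matrix.PosSemidef.zero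
    (fun i _ => h i)

lemma aux_trace_ct_mul_self_nonneg {m n : Type*} [Fintype m] [Fintype n] (M : Matrix m n ℂ) :
    0 ≤ (Mᴴ * M).trace := by
  rw [Matrix.trace]
  refine Finset.sum_nonneg fun j _ => ?_
  rw [Matrix.diag_apply, Matrix.mul_apply]
  refine Finset.sum_nonneg fun i _ => ?_
  simpa [Matrix.conjTranspose_apply] using star_mul_self_nonneg (M i j)

open scoped ComplexOrder MatrixOrder in
lemma aux_psd_factor {n : Type*} [Fintype n] [DecidableEq n] {P : Matrix n n ℂ}
    (h : P.PosSemidef) : ∃ B : Matrix n n ℂ, P = Bᴴ * B := by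
  obtain ⟨X, hX, -, hP⟩ := CFC.exists_sqrt_of_isSelfAdjoint_of_quasispectrumRestricts
    h.isHermitian (QuasispectrumRestricts.nnreal_of_nonneg h.nonneg)
  exact ⟨X, by rw [← hP, ← star_eq_conjTranspose, hX.star_eq]⟩

lemma aux_trace_psd_mul_nonneg {n : Type*} [Fintype n] [DecidableEq n] {P Q : Matrix n n ℂ}
    (hP : P.PosSemidef) (hQ : Q.PosSemidef) : 0 ≤ (P * Q).trace := by
  obtain ⟨Bp, rfl⟩ := aux_psd_factor hP
  obtain ⟨Bq, rfl⟩ := aux_psd_factor hQ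
  have h1 : Bpᴴ * Bp * (Bqᴴ * Bq) = Bpᴴ * (Bp * Bqᴴ * Bq) := by
    simp only [Matrix.mul_assoc]
  have h2 : ((Bp * Bqᴴ)ᴴ * (Bp * Bqᴴ)).trace = (Bpᴴ * Bp * (Bqᴴ * Bq)).trace := by
    rw [Matrix.conjTranspose_mul, Matrix.conjTranspose_conjTranspose, h1,
      Matrix.trace_mul_comm]
    conv_rhs => rw [Matrix.trace_mul_comm]
    simp only [Matrix.mul_assoc]
  rw [← h2]
  exact aux_trace_ct_mul_self_nonneg _

lemma aux_form_decomp (ρ : Matrix (A × B) (A × B) ℂ) (v : B → ℂ) :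
    star v ⬝ᵥ (ptL ρ *ᵥ v)
      = ∑ a : A, star (fun p : A × B => if p.1 = a then v p.2 else 0) ⬝ᵥ
          (ρ *ᵥ fun p : A × B => if p.1 = a then v p.2 else 0) := by
  simp only [dotProduct, mulVec, ptL, Matrix.of_apply, Pi.star_apply, apply_ite (star : ℂ → ℂ),
    star_zero, Fintype.sum_prod_type, mul_ite, ite_mul, zero_mul, mul_zero, Finset.mul_sum,
    Finset.sum_mul, Finset.sum_ite_irrel, Finset.sum_const_zero, Finset.sum_ite_eq,
    Finset.sum_ite_eq', Finset.mem_univ, if_true]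
  exact (Finset.sum_congr rfl fun x _ => Finset.sum_comm).trans Finset.sum_comm

lemma aux_ptL_hermitian {ρ : Matrix (A × B) (A × B) ℂ} (hρ : ρ.IsHermitian) :
    (ptL ρ).IsHermitian := by
  ext b1 b2
  simp only [conjTranspose_apply, ptL, Matrix.of_apply, star_sum]
  exact Finset.sum_congr rfl fun a _ => hρ.apply _ _

lemma aux_ptL_psd {ρ : Matrix (A × B) (A × B) ℂ} (hρ : ρ.PosSemidef) :
    (ptL ρ).PosSemidef := by
  refine .of_dotProduct_mulVec_nonneg (aux_ptL_hermitian hρ.1) fun v => ?_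
  rw [aux_form_decomp]
  exact Finset.sum_nonneg fun a _ => hρ.dotProduct_mulVec_nonneg _

lemma aux_one_kron_psd {Q : Matrix B B ℂ} (hQ : Q.PosSemidef) :
    ((1 : Matrix A A ℂ) ⊗ₖ Q).PosSemidef := by
  obtain ⟨M, rfl⟩ := aux_psd_factor hQ
  have h : (1 : Matrix A A ℂ) ⊗ₖ (Mᴴ * M)
      = ((1 : Matrix A A ℂ) ⊗ₖ M)ᴴ * ((1 : Matrix A A ℂ) ⊗ₖ M) := by
    rw [aux_kronCT, Matrix.conjTranspose_one, ← Matrix.mul_kronecker_mul, Matrix.one_mul]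
  rw [h]
  exact Matrix.posSemidef_conjTranspose_mul_self _

lemma aux_kron_one_form (Q : Matrix B B ℂ) (x : A × B → ℂ) :
    star x ⬝ᵥ (((1 : Matrix A A ℂ) ⊗ₖ Q) *ᵥ x)
      = ∑ a : A, star (fun b => x (a, b)) ⬝ᵥ (Q *ᵥ fun b => x (a, b)) := by
  simp only [dotProduct, mulVec, kroneckerMap_apply, Matrix.one_apply, Pi.star_apply,
    Fintype.sum_prod_type, mul_ite, ite_mul, zero_mul, mul_zero, one_mul, mul_one,
    Finset.mul_sum, Finset.sum_mul, Finset.sum_ite_irrel, Finset.sum_const_zero,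
    Finset.sum_ite_eq, Finset.sum_ite_eq', Finset.mem_univ, if_true]

lemma aux_qform (M : Matrix (A × B) (A × B) ℂ) (v : A × B → ℂ) :
    star v ⬝ᵥ ((Mᴴ * M) *ᵥ v) = ((∑ k, Complex.normSq ((M *ᵥ v) k) : ℝ) : ℂ) := by
  rw [← Matrix.mulVec_mulVec, Matrix.dotProduct_mulVec, ← Matrix.star_mulVec]
  push_cast
  refine Finset.sum_congr rfl fun k _ => ?_
  simp [Complex.normSq_eq_conj_mul_self]

lemma aux_key {ρ : Matrix (A × B) (A × B) ℂ} (hρ : ρ.PosSemidef) :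
    (((Fintype.card A : ℂ) • ((1 : Matrix A A ℂ) ⊗ₖ ptL ρ) - ρ)).PosSemidef := by
  obtain ⟨M, hM⟩ := aux_psd_factor hρ
  have hherm : (((Fintype.card A : ℂ) • ((1 : Matrix A A ℂ) ⊗ₖ ptL ρ) - ρ)).IsHermitian := by
    refine Matrix.IsHermitian.sub ?_ hρ.1
    show (_ • _)ᴴ = _
    rw [Matrix.conjTranspose_smul]
    have h1 : ((1 : Matrix A A ℂ) ⊗ₖ ptL ρ)ᴴ = (1 : Matrix A A ℂ) ⊗ₖ ptL ρ := by
      rw [aux_kronCT, Matrix.conjTranspose_one, (aux_ptL_hermitian hρ.1).eq]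
    rw [h1]
    norm_cast
  refine .of_dotProduct_mulVec_nonneg hherm fun x => ?_
  set z : A → A → (A × B → ℂ) := fun a c => fun p : A × B => if p.1 = c then x (a, p.2) else 0
    with hz
  have hx : x = ∑ a, z a a := by
    funext p
    simp only [Finset.sum_apply, hz]
    rw [Finset.sum_eq_single p.1]
    · simp
    · intro c _ hc; simp [Ne.symm hc]
    · simp
  have hρform : star x ⬝ᵥ (ρ *ᵥ x) = ((∑ k, Complex.normSq ((M *ᵥ x) k) : ℝ) : ℂ) := by
    rw [hM]; exact aux_qform M x
  have hσform : star x ⬝ᵥ (((1 : Matrix A A ℂ) ⊗ₖ ptL ρ) *ᵥ x)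
      = ((∑ a, ∑ c, ∑ k, Complex.normSq ((M *ᵥ z a c) k) : ℝ) : ℂ) := by
    rw [aux_kron_one_form]
    push_cast
    refine Finset.sum_congr rfl fun a _ => ?_
    rw [aux_form_decomp]
    push_cast
    refine Finset.sum_congr rfl fun c _ => ?_
    have h2 : (fun p : A × B => if p.1 = c then (fun b => x (a, b)) p.2 else 0) = z a c := rfl
    rw [h2, hM, aux_qform]
    norm_cast
  have hMsum : M *ᵥ x = ∑ a, M *ᵥ z a a := by
    conv_lhs => rw [hx]
    simp only [← Matrix.mulVecLin_apply]
    exact map_sum M.mulVecLin (fun a => z a a) Finset.univ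
  have hperk : ∀ k, Complex.normSq ((M *ᵥ x) k)
      ≤ (Fintype.card A : ℝ) * ∑ a, Complex.normSq ((M *ᵥ z a a) k) := by
    intro k
    have hk : (M *ᵥ x) k = ∑ a, (M *ᵥ z a a) k := by
      rw [hMsum]; exact Finset.sum_apply k Finset.univ _
    calc Complex.normSq ((M *ᵥ x) k)
        = ‖(M *ᵥ x) k‖ ^ 2 := Complex.normSq_eq_norm_sq _
      _ ≤ (∑ a, ‖(M *ᵥ z a a) k‖) ^ 2 := by
          have h3 := norm_sum_le Finset.univ (fun a => (M *ᵥ z a a) k)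
          rw [hk]
          exact pow_le_pow_left₀ (norm_nonneg _) h3 2
      _ ≤ (Finset.univ.card : ℝ) * ∑ a, ‖(M *ᵥ z a a) k‖ ^ 2 :=
          sq_sum_le_card_mul_sum_sq
      _ = (Fintype.card A : ℝ) * ∑ a, Complex.normSq ((M *ᵥ z a a) k) := by
          rw [Finset.card_univ]
          congr 1
          exact Finset.sum_congr rfl fun a _ => (Complex.normSq_eq_norm_sq _).symm
  have hreal : (∑ k, Complex.normSq ((M *ᵥ x) k) : ℝ)
      ≤ (Fintype.card A : ℝ) * ∑ a, ∑ c, ∑ k, Complex.normSq ((M *ᵥ z a c) k) := by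
    calc (∑ k, Complex.normSq ((M *ᵥ x) k) : ℝ)
        ≤ ∑ k, (Fintype.card A : ℝ) * ∑ a, Complex.normSq ((M *ᵥ z a a) k) :=
          Finset.sum_le_sum fun k _ => hperk k
      _ = (Fintype.card A : ℝ) * ∑ a, ∑ k, Complex.normSq ((M *ᵥ z a a) k) := by
          rw [← Finset.mul_sum, Finset.sum_comm]
      _ ≤ (Fintype.card A : ℝ) * ∑ a, ∑ c, ∑ k, Complex.normSq ((M *ᵥ z a c) k) := by
          refine mul_le_mul_of_nonneg_left (Finset.sum_le_sum fun a _ => ?_) (by positivity)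
          refine Finset.single_le_sum (f := fun c => ∑ k, Complex.normSq ((M *ᵥ z a c) k))
            (fun c _ => Finset.sum_nonneg fun k _ => Complex.normSq_nonneg _) (Finset.mem_univ a)
  rw [Matrix.sub_mulVec, dotProduct_sub, Matrix.smul_mulVec, dotProduct_smul,
    hρform, hσform]
  rw [smul_eq_mul, sub_nonneg]
  have h4 : ((Fintype.card A : ℂ)) * ((∑ a, ∑ c, ∑ k, Complex.normSq ((M *ᵥ z a c) k) : ℝ) : ℂ)
      = (((Fintype.card A : ℝ) * ∑ a, ∑ c, ∑ k, Complex.normSq ((M *ᵥ z a c) k) : ℝ) : ℂ) := by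
    push_cast; ring
  rw [h4]
  exact_mod_cast hreal

lemma aux_ptL_image (ρ : Matrix (A × B) (A × B) ℂ) (K : ι → Matrix C A ℂ)
    (hTP : ∑ i, (K i)ᴴ * K i = 1) :
    ptL (∑ i, (K i ⊗ₖ (1 : Matrix B B ℂ)) * ρ * (K i ⊗ₖ (1 : Matrix B B ℂ))ᴴ) = ptL ρ := by
  have hδ : ∀ a a' : A, (∑ i, ∑ c, (star ((K i) c a') * (K i) c a)) = if a' = a then 1 else 0 := by
    intro a a'
    have h := congrFun (congrFun (congrArg (fun M : Matrix A A ℂ => (M : Matrix A A ℂ)) hTP) a') a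
    simp only [Matrix.sum_apply, Matrix.mul_apply, Matrix.conjTranspose_apply,
      Matrix.one_apply] at h
    simpa using h
  ext b1 b2
  simp only [ptL, Matrix.of_apply, Matrix.sum_apply, Matrix.mul_apply,
    Matrix.conjTranspose_apply, kroneckerMap_apply, Matrix.one_apply,
    Fintype.sum_prod_type, star_mul', mul_ite, ite_mul, mul_one, one_mul, mul_zero, zero_mul,
    apply_ite (star : ℂ → ℂ), star_one, star_zero, Finset.sum_ite_irrel, Finset.sum_const_zero,
    Finset.sum_ite_eq, Finset.sum_ite_eq', Finset.mem_univ, if_true]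
  simp only [Finset.sum_mul]
  calc ∑ c : C, ∑ i : ι, ∑ a2 : A, ∑ a3 : A,
        K i c a3 * ρ (a3, b1) (a2, b2) * star (K i c a2)
      = ∑ i : ι, ∑ a2 : A, ∑ c : C, ∑ a3 : A,
        K i c a3 * ρ (a3, b1) (a2, b2) * star (K i c a2) := by
        rw [Finset.sum_comm]
        exact Finset.sum_congr rfl fun i _ => Finset.sum_comm
    _ = ∑ a2 : A, ∑ i : ι, ∑ a3 : A, ∑ c : C,
        K i c a3 * ρ (a3, b1) (a2, b2) * star (K i c a2) := by
        rw [Finset.sum_comm]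
        exact Finset.sum_congr rfl fun a2 _ => Finset.sum_congr rfl fun i _ => Finset.sum_comm
    _ = ∑ a2 : A, ∑ a3 : A, ∑ i : ι, ∑ c : C,
        K i c a3 * ρ (a3, b1) (a2, b2) * star (K i c a2) := by
        exact Finset.sum_congr rfl fun a2 _ => Finset.sum_comm
    _ = ∑ a2 : A, ∑ a3 : A,
        (∑ i : ι, ∑ c : C, star (K i c a2) * K i c a3) * ρ (a3, b1) (a2, b2) := by
        refine Finset.sum_congr rfl fun a2 _ => Finset.sum_congr rfl fun a3 _ => ?_
        simp only [Finset.sum_mul]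
        refine Finset.sum_congr rfl fun i _ => Finset.sum_congr rfl fun c _ => by ring
    _ = ∑ a : A, ρ (a, b1) (a, b2) := by
        simp only [hδ, ite_mul, one_mul, zero_mul, Finset.sum_ite_eq, Finset.mem_univ, if_true]

end aux12

/-- data processing for `H_H^ε` under a unital CPTP map (in Kraus form)
acting on the main system `A`. -/
theorem stmt12 {A B C ι : Type*} [Fintype A] [DecidableEq A] [Fintype B] [DecidableEq B]
    [Fintype C] [DecidableEq C] [Fintype ι]
    (ρ : Matrix (A × B) (A × B) ℂ) (hρ : IsState ρ)
    (K : ι → Matrix C A ℂ) (hTP : ∑ i, (K i)ᴴ * K i = 1)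
    (hUnital : ∑ i, K i * (K i)ᴴ = 1)
    (ε : ℝ) (hε0 : 0 ≤ ε) (hε1 : ε ≤ 1) :
    condHH ρ ε ≤
      condHH (∑ i, (K i ⊗ₖ (1 : Matrix B B ℂ)) * ρ * (K i ⊗ₖ (1 : Matrix B B ℂ))ᴴ) ε := by
  classical
  -- notation
  set τ : ι → Matrix (C × B) (A × B) ℂ := fun i => K i ⊗ₖ (1 : Matrix B B ℂ) with hτ
  set ρ' : Matrix (C × B) (C × B) ℂ := ∑ i, τ i * ρ * (τ i)ᴴ with hρ'
  have hτCT : ∀ i, (τ i)ᴴ = (K i)ᴴ ⊗ₖ (1 : Matrix B B ℂ) := fun i => by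
    rw [hτ, aux_kronCT, Matrix.conjTranspose_one]
  -- F1 : ∑ τᴴ τ = 1
  have hF1 : ∑ i, (τ i)ᴴ * τ i = (1 : Matrix (A × B) (A × B) ℂ) := by
    have h : ∀ i, (τ i)ᴴ * τ i = ((K i)ᴴ * K i) ⊗ₖ (1 : Matrix B B ℂ) := fun i => by
      rw [hτCT, hτ, ← Matrix.mul_kronecker_mul, Matrix.one_mul]
    simp_rw [h]
    rw [aux_sum_kron, hTP, Matrix.one_kronecker_one]
  -- F4 : ∑ τ (1 ⊗ Q) τᴴ = 1 ⊗ Q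
  have hF4 : ∀ Q : Matrix B B ℂ,
      ∑ i, τ i * ((1 : Matrix A A ℂ) ⊗ₖ Q) * (τ i)ᴴ = (1 : Matrix C C ℂ) ⊗ₖ Q := by
    intro Q
    have h : ∀ i, τ i * ((1 : Matrix A A ℂ) ⊗ₖ Q) * (τ i)ᴴ
        = (K i * (K i)ᴴ) ⊗ₖ Q := fun i => by
      rw [hτCT, hτ, ← Matrix.mul_kronecker_mul, ← Matrix.mul_kronecker_mul,
        Matrix.mul_one, Matrix.one_mul, Matrix.mul_one]
    simp_rw [h]
    rw [aux_sum_kron, hUnital]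
  -- F3 : trace shuffle
  have hF3 : ∀ (P : Matrix (C × B) (C × B) ℂ) (X : Matrix (A × B) (A × B) ℂ),
      ((∑ i, (τ i)ᴴ * P * τ i) * X).trace = (P * ∑ i, τ i * X * (τ i)ᴴ).trace := by
    intro P X
    rw [Finset.sum_mul, Matrix.trace_sum, Finset.mul_sum, Matrix.trace_sum]
    refine Finset.sum_congr rfl fun i _ => ?_
    have hassoc : (τ i)ᴴ * P * τ i * X = (τ i)ᴴ * (P * (τ i * X)) := by
      simp only [Matrix.mul_assoc]
    rw [hassoc, Matrix.trace_mul_comm]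
    simp only [Matrix.mul_assoc]
  -- trace of ρ' is 1
  have htrρ' : ρ'.trace = 1 := by
    have h : ((∑ i, (τ i)ᴴ * (1 : Matrix (C × B) (C × B) ℂ) * τ i) * ρ).trace = ρ'.trace := by
      rw [hF3, Matrix.one_mul, ← hρ']
    rw [← h]
    simp only [Matrix.mul_one]
    rw [hF1, Matrix.one_mul, hρ.2]
  -- ρ' is PSD
  have hρ'psd : ρ'.PosSemidef := by
    rw [hρ']
    exact aux_psd_sum _ fun i => hρ.1.mul_mul_conjTranspose_same (τ i)
  -- the σ matrices are PSD
  have hσpsd : ((1 : Matrix A A ℂ) ⊗ₖ ptL ρ).PosSemidef := aux_one_kron_psd (aux_ptL_psd hρ.1)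
  have hσ'psd : ((1 : Matrix C C ℂ) ⊗ₖ ptL ρ').PosSemidef :=
    aux_one_kron_psd (aux_ptL_psd hρ'psd)
  -- the feasible value sets
  set S : Set ℝ := {t : ℝ | ∃ P : Matrix (A × B) (A × B) ℂ, P.PosSemidef ∧
    ((1 : Matrix (A × B) (A × B) ℂ) - P).PosSemidef ∧
    1 - ε ≤ ((P * ρ).trace).re ∧
    t = ((P * ((1 : Matrix A A ℂ) ⊗ₖ ptL ρ)).trace).re} with hS
  set S' : Set ℝ := {t : ℝ | ∃ P : Matrix (C × B) (C × B) ℂ, P.PosSemidef ∧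
    ((1 : Matrix (C × B) (C × B) ℂ) - P).PosSemidef ∧
    1 - ε ≤ ((P * ρ').trace).re ∧
    t = ((P * ((1 : Matrix C C ℂ) ⊗ₖ ptL ρ')).trace).re} with hS'
  have hcondS : condVal ρ ε = sInf S := rfl
  have hcondS' : condVal ρ' ε = sInf S' := rfl
  -- S is bounded below by 0
  have hSbdd : ∀ t ∈ S, (0 : ℝ) ≤ t := by
    rintro t ⟨P, hP, -, -, rfl⟩
    have := aux_trace_psd_mul_nonneg hP hσpsd
    exact (Complex.le_def.mp this).1
  have hS'bdd : ∀ t ∈ S', (0 : ℝ) ≤ t := by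
    rintro t ⟨P, hP, -, -, rfl⟩
    have := aux_trace_psd_mul_nonneg hP hσ'psd
    exact (Complex.le_def.mp this).1
  -- S' nonempty
  have hS'ne : S'.Nonempty := by
    refine ⟨_, ⟨1, Matrix.PosSemidef.one, by simpa using Matrix.PosSemidef.zero,
      ?_, rfl⟩⟩
    rw [Matrix.one_mul, htrρ']
    simpa using hε0
  have hSne : S.Nonempty := by
    refine ⟨_, ⟨1, Matrix.PosSemidef.one, by simpa using Matrix.PosSemidef.zero,
      ?_, rfl⟩⟩
    rw [Matrix.one_mul, hρ.2]
    simpa using hε0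
  -- S' ⊆ S
  have hsub : S' ⊆ S := by
    rintro t ⟨P', hP'1, hP'2, hP'3, rfl⟩
    refine ⟨∑ i, (τ i)ᴴ * P' * τ i, aux_psd_sum _ fun i => hP'1.conjTranspose_mul_mul_same (τ i),
      ?_, ?_, ?_⟩
    · have h : (1 : Matrix (A × B) (A × B) ℂ) - ∑ i, (τ i)ᴴ * P' * τ i
          = ∑ i, (τ i)ᴴ * ((1 : Matrix (C × B) (C × B) ℂ) - P') * τ i := by
        simp only [Matrix.sub_mul, Matrix.mul_sub, Matrix.mul_one, Finset.sum_sub_distrib]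
        rw [hF1]
      rw [h]
      exact aux_psd_sum _ fun i => hP'2.conjTranspose_mul_mul_same (τ i)
    · rw [hF3 P' ρ, ← hρ']
      exact hP'3
    · rw [hF3 P' ((1 : Matrix A A ℂ) ⊗ₖ ptL ρ), hF4 (ptL ρ)]
      have h := aux_ptL_image ρ K hTP
      rw [← hρ'] at h
      rw [h]
  -- condVal inequality
  have hmain : condVal ρ ε ≤ condVal ρ' ε := by
    rw [hcondS, hcondS']
    exact csInf_le_csInf ⟨0, fun t ht => hSbdd t ht⟩ hS'ne hsub
  -- cases on ε
  rcases eq_or_lt_of_le hε1 with hε | hε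
  · -- ε = 1 : both condVals are 0
    subst hε
    have hzero : ∀ (T : Set ℝ), (∀ t ∈ T, (0:ℝ) ≤ t) → (0 : ℝ) ∈ T → sInf T = 0 := by
      intro T hT h0
      exact le_antisymm (csInf_le ⟨0, fun t ht => hT t ht⟩ h0) (le_csInf ⟨0, h0⟩ hT)
    have h0S : (0 : ℝ) ∈ S := by
      refine ⟨0, Matrix.PosSemidef.zero, by simpa using Matrix.PosSemidef.one, by simp, by simp⟩
    have h0S' : (0 : ℝ) ∈ S' := by
      refine ⟨0, Matrix.PosSemidef.zero, by simpa using Matrix.PosSemidef.one, by simp, by simp⟩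
    show Real.logb 2 (condVal ρ 1) ≤ Real.logb 2 (condVal ρ' 1)
    rw [hcondS, hcondS', hzero S hSbdd h0S, hzero S' hS'bdd h0S']
  · -- ε < 1 : condVal ρ ε > 0
    have hAne : Nonempty (A × B) := by
      by_contra h
      rw [not_nonempty_iff] at h
      have : ρ.trace = 0 := by
        rw [Matrix.trace]
        exact Finset.sum_of_isEmpty _
      rw [hρ.2] at this
      exact one_ne_zero this
    have hA : 0 < (Fintype.card A : ℝ) := by
      have : Nonempty A := ⟨hAne.some.1⟩
      exact_mod_cast Fintype.card_pos
    have hlb : ∀ t ∈ S, (1 - ε) / (Fintype.card A : ℝ) ≤ t := by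
      rintro t ⟨P, hP, -, hP3, rfl⟩
      have hkey := aux_trace_psd_mul_nonneg hP (aux_key hρ.1)
      have hexp : (P * ((Fintype.card A : ℂ) • ((1 : Matrix A A ℂ) ⊗ₖ ptL ρ) - ρ)).trace
          = (Fintype.card A : ℂ) * (P * ((1 : Matrix A A ℂ) ⊗ₖ ptL ρ)).trace
            - (P * ρ).trace := by
        rw [Matrix.mul_sub, Matrix.trace_sub, Matrix.mul_smul, Matrix.trace_smul, smul_eq_mul]
      rw [hexp] at hkey
      have hre := (Complex.le_def.mp hkey).1
      simp only [Complex.zero_re, Complex.sub_re, Complex.mul_re, Complex.natCast_re,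
        Complex.natCast_im, zero_mul, sub_zero] at hre
      have h5 : (1 - ε) ≤ (Fintype.card A : ℝ) * ((P * ((1 : Matrix A A ℂ) ⊗ₖ ptL ρ)).trace).re := by
        calc (1 - ε) ≤ ((P * ρ).trace).re := hP3
          _ ≤ (Fintype.card A : ℝ) * ((P * ((1 : Matrix A A ℂ) ⊗ₖ ptL ρ)).trace).re := by
              linarith
      rw [div_le_iff₀ hA]
      linarith [h5]
    have hpos : 0 < condVal ρ ε := by
      rw [hcondS]
      have h6 : (1 - ε) / (Fintype.card A : ℝ) ≤ sInf S := le_csInf hSne hlb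
      have h7 : 0 < (1 - ε) / (Fintype.card A : ℝ) := by
        apply div_pos <;> [linarith; exact hA]
      linarith
    show Real.logb 2 (condVal ρ ε) ≤ Real.logb 2 (condVal ρ' ε)
    exact Real.logb_le_logb_of_le (by norm_num) hpos hmain
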